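/- Let $\mathcal{X} \subseteq \mathbb{R}^d$ be a bounded set, let $\Sigma \in \mathbb{R}^{d \times d}$ be a symmetric positive definite matrix, and let $e_1, \dots, e_D \in \mathbb{R}^d$. Define the random feature map $\tilde{\Phi} : \mathcal{X} \to \mathbb{R}^{2D}$ by $\tilde{\Phi}(x) = \left( \tfrac{1}{\sqrt{D}} \cos(e_i^{\top} \Sigma^{1/2} x), \tfrac{1}{\sqrt{D}} \sin(e_i^{\top} \Sigma^{1/2} x) \right)_{i=1}^{D}$. If $\operatorname{span}\{e_1, \dots, e_D\} = \mathbb{R}^d$ and $\|\Sigma^{1/2}\|_F \cdot \operatorname{diam}(\mathcal{X}) \cdot \max_{1 \le i \le D} \|e_i\| < 2\pi$, then $\tilde{\Phi}$ is injective on $\mathcal{X}$. -/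

import Mathlib

/-!
The pair `(cos θ, sin θ)` determines `θ` modulo `2π`, so equal features at `x, y` force each
phase difference `⟪eᵢ, S (x - y)⟫` into `2πℤ`. By Cauchy–Schwarz and the bound of the operator
norm by the Frobenius norm, that difference has absolute value at most
`‖eᵢ‖ ‖S‖_F ‖x - y‖ < 2π`, hence vanishes. As the `eᵢ` span, `S (x - y) = 0`, and `S` is
invertible.
-/

theorem Real.eq_of_cos_eq_of_sin_eq {a b : ℝ} (hcos : Real.cos a = Real.cos b)
    (hsin : Real.sin a = Real.sin b) (hab : |a - b| < 2 * Real.pi) : a = b := by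
  have hone : Real.cos (a - b) = 1 := by
    rw [Real.cos_sub, hcos, hsin, ← sq, ← sq, Real.cos_sq_add_sin_sq]
  have := (Real.cos_eq_one_iff_of_lt_of_lt (abs_lt.1 hab).1 (abs_lt.1 hab).2).1 hone
  linarith

namespace Matrix

open scoped Norms.Frobenius

theorem norm_toEuclideanLin_le_frobenius_norm {𝕜 m n : Type*} [RCLike 𝕜] [Fintype m] [Fintype n]
    [DecidableEq n] (M : Matrix m n 𝕜) (v : EuclideanSpace 𝕜 n) :
    ‖toEuclideanLin M v‖ ≤ ‖M‖ * ‖v‖ := by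
  calc ‖toEuclideanLin M v‖ = ‖replicateCol Unit (M *ᵥ v.ofLp)‖ := by
        rw [frobenius_norm_replicateCol, toLpLin_apply]
    _ = ‖M * replicateCol Unit v.ofLp‖ := by rw [replicateCol_mulVec]
    _ ≤ ‖M‖ * ‖replicateCol Unit v.ofLp‖ := frobenius_norm_mul _ _
    _ = ‖M‖ * ‖v‖ := by rw [frobenius_norm_replicateCol, WithLp.toLp_ofLp]

theorem norm_toEuclideanLin_le_sqrt_sum_sq {m n : Type*} [Fintype m] [Fintype n] [DecidableEq n]
    (M : Matrix m n ℝ) (v : EuclideanSpace ℝ n) :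
    ‖toEuclideanLin M v‖ ≤ Real.sqrt (∑ i, ∑ j, M i j ^ 2) * ‖v‖ := by
  simpa [frobenius_norm_def, Real.sqrt_eq_rpow] using norm_toEuclideanLin_le_frobenius_norm M v

theorem sum_sum_mul_eq_inner_toEuclideanLin {m n : Type*} [Fintype m] [Fintype n] [DecidableEq n]
    (u : EuclideanSpace ℝ m) (M : Matrix m n ℝ) (v : EuclideanSpace ℝ n) :
    ∑ j, ∑ k, u j * M j k * v k = inner ℝ u (toEuclideanLin M v) := by
  simp only [PiLp.inner_apply, toLpLin_apply, mulVec, dotProduct, RCLike.inner_apply,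
    conj_trivial, Finset.sum_mul]
  exact Finset.sum_congr rfl fun j _ => Finset.sum_congr rfl fun k _ => by ring

theorem abs_inner_toEuclideanLin_le {m n : Type*} [Fintype m] [Fintype n] [DecidableEq n]
    (u : EuclideanSpace ℝ m) (M : Matrix m n ℝ) (v : EuclideanSpace ℝ n) :
    |inner ℝ u (toEuclideanLin M v)| ≤ ‖u‖ * Real.sqrt (∑ i, ∑ j, M i j ^ 2) * ‖v‖ := by
  rw [mul_assoc]
  exact (abs_real_inner_le_norm _ _).trans <|
    mul_le_mul_of_nonneg_left (norm_toEuclideanLin_le_sqrt_sum_sq M v) (norm_nonneg u)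

theorem PosDef.toEuclideanLin_injective {n : Type*} [Fintype n] [DecidableEq n]
    {M : Matrix n n ℝ} (hM : M.PosDef) : Function.Injective (toEuclideanLin M) := fun u v huv =>
  WithLp.ofLp_injective 2 <| mulVec_injective_iff_isUnit.2 hM.isUnit <| by
    simpa [toLpLin_apply] using huv

end Matrix

theorem eq_zero_of_forall_inner_eq_zero_of_span_eq_top {𝕜 E ι : Type*} [RCLike 𝕜]
    [NormedAddCommGroup E] [InnerProductSpace 𝕜 E] {e : ι → E}
    (hspan : Submodule.span 𝕜 (Set.range e) = ⊤) {w : E} (hw : ∀ i, inner 𝕜 (e i) w = 0) :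
    w = 0 := by
  have : innerₛₗ 𝕜 w = 0 := LinearMap.ext_on_range hspan fun i => by
    simpa using inner_eq_zero_symm.1 (hw i)
  simpa using congr($this w)

theorem random_feature_map_injective_general (d D : ℕ)
    (X : Set (EuclideanSpace ℝ (Fin d))) (hX : Bornology.IsBounded X)
    (S : Matrix (Fin d) (Fin d) ℝ)
    (hSpd : S.PosDef)
    (e : Fin D → EuclideanSpace ℝ (Fin d))
    (hspan : Submodule.span ℝ (Set.range e) = ⊤)
    (hbound : Real.sqrt (∑ i : Fin d, ∑ j : Fin d, (S i j) ^ 2) * Metric.diam X *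
        (⨆ i : Fin D, ‖e i‖) < 2 * Real.pi)
    (Φ : EuclideanSpace ℝ (Fin d) → Fin D → ℝ × ℝ)
    (hΦ : ∀ x i, Φ x i =
      ((1 / Real.sqrt D) * Real.cos (∑ j : Fin d, ∑ k : Fin d, e i j * S j k * x k),
       (1 / Real.sqrt D) * Real.sin (∑ j : Fin d, ∑ k : Fin d, e i j * S j k * x k))) :
    Set.InjOn Φ X := by
  intro x hx y hy hxy
  have hphase : ∀ i, inner ℝ (e i) (Matrix.toEuclideanLin S (x - y)) = 0 := by
    intro i
    have hscale : (1 / Real.sqrt D : ℝ) ≠ 0 := by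
      have : (0 : ℝ) < D := by exact_mod_cast i.pos
      positivity
    obtain ⟨hcos, hsin⟩ := Prod.mk.inj (by simpa only [hΦ] using congrFun hxy i)
    simp only [Matrix.sum_sum_mul_eq_inner_toEuclideanLin] at hcos hsin
    have he : ‖e i‖ ≤ ⨆ i, ‖e i‖ := le_ciSup (Set.finite_range fun i ↦ ‖e i‖).bddAbove i
    have hdist : ‖x - y‖ ≤ Metric.diam X := by
      simpa only [dist_eq_norm] using Metric.dist_le_diam_of_mem hX hx hy
    rw [map_sub, inner_sub_right, sub_eq_zero]
    refine Real.eq_of_cos_eq_of_sin_eq (mul_left_cancel₀ hscale hcos)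
      (mul_left_cancel₀ hscale hsin) ?_
    calc _ = |inner ℝ (e i) (Matrix.toEuclideanLin S (x - y))| := by
          rw [map_sub, inner_sub_right]
      _ ≤ ‖e i‖ * Real.sqrt (∑ i, ∑ j, S i j ^ 2) * ‖x - y‖ :=
          Matrix.abs_inner_toEuclideanLin_le _ _ _
      _ ≤ (⨆ i, ‖e i‖) * Real.sqrt (∑ i, ∑ j, S i j ^ 2) * Metric.diam X := by
          gcongr
          exact mul_nonneg ((norm_nonneg _).trans he) (Real.sqrt_nonneg _)
      _ < 2 * Real.pi := by linarith
  have hT := eq_zero_of_forall_inner_eq_zero_of_span_eq_top hspan hphase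
  exact sub_eq_zero.1 (hSpd.toEuclideanLin_injective (by rw [hT, map_zero]))

/-- Injectivity of the Fourier random feature map: if `X ⊆ ℝ^d` is bounded, `A` is a
symmetric positive definite matrix with (symmetric positive definite) square root `S`
(so `S * S = A`), the vectors `e₁, …, e_D` span `ℝ^d`, and
`‖S‖_F · diam(X) · maxᵢ ‖eᵢ‖ < 2π` (with `‖S‖_F` the Frobenius norm), then the map
`Φ(x) = (D^{-1/2} cos(eᵢᵀ S x), D^{-1/2} sin(eᵢᵀ S x))_{i=1}^{D}` is injective on `X`. -/
theorem random_feature_map_injective (d D : ℕ)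
    (X : Set (EuclideanSpace ℝ (Fin d))) (hX : Bornology.IsBounded X)
    (A S : Matrix (Fin d) (Fin d) ℝ)
    (hAsymm : A.IsSymm) (hApd : A.PosDef)
    (hSsymm : S.IsSymm) (hSpd : S.PosDef) (hS : S * S = A)
    (e : Fin D → EuclideanSpace ℝ (Fin d))
    (hspan : Submodule.span ℝ (Set.range e) = ⊤)
    (hbound : Real.sqrt (∑ i : Fin d, ∑ j : Fin d, (S i j) ^ 2) * Metric.diam X *
        (⨆ i : Fin D, ‖e i‖) < 2 * Real.pi)
    (Φ : EuclideanSpace ℝ (Fin d) → Fin D → ℝ × ℝ)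
    (hΦ : ∀ x i, Φ x i =
      ((1 / Real.sqrt D) * Real.cos (∑ j : Fin d, ∑ k : Fin d, e i j * S j k * x k),
       (1 / Real.sqrt D) * Real.sin (∑ j : Fin d, ∑ k : Fin d, e i j * S j k * x k))) :
    Set.InjOn Φ X :=
  random_feature_map_injective_general d D X hX S hSpd e hspan hbound Φ hΦ
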